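/- arXiv:1403.3001 — 2 statements merged into one kernel-verified Lean document; each statement's English description precedes it below -/
import Mathlib

section
/- Let (X_i)_{i≥1} be i.i.d. St. Petersburg payoffs and let ρ_n = (X_1 · X_2 · ⋯ · X_n)^{1/n} denote the geometric mean of the first n payoffs. Then for every δ > 0 and every η > 0 there exists a natural number N = N(δ, η) such that the probability of the event { for all n > N, 2 − δ < ρ_n < 2 + δ } exceeds 1 − η. -/
open MeasureTheory ProbabilityTheory Filter

/-- A St. Petersburg payoff: a random variable taking the value `2 ^ k`
with probability `2 ^ (-(k+1))` for each natural number `k`. -/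
def IsStPetersburg {Ω : Type*} [MeasurableSpace Ω] (μ : Measure Ω) (X : Ω → ℝ) : Prop :=
  Measurable X ∧ ∀ k : ℕ, μ {ω | X ω = 2 ^ k} = (1 / 2 : ENNReal) ^ (k + 1)

open Topology

lemma sp_meas {Ω : Type*} [MeasurableSpace Ω] {μ : Measure Ω} {X : Ω → ℝ}
    (h : IsStPetersburg μ X) (k : ℕ) : MeasurableSet {ω | X ω = 2 ^ k} :=
  h.1 (measurableSet_singleton _)

lemma sp_disj {Ω : Type*} [MeasurableSpace Ω] {μ : Measure Ω} {X : Ω → ℝ}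
    (h : IsStPetersburg μ X) :
    Pairwise (Function.onFun Disjoint (fun k : ℕ => {ω | X ω = 2 ^ k})) := by
  intro k l hkl
  refine Set.disjoint_left.2 fun ω h1 h2 => hkl ?_
  have : (2 : ℝ) ^ k = 2 ^ l := by
    have e1 : X ω = 2 ^ k := h1
    have e2 : X ω = 2 ^ l := h2
    rw [← e1, ← e2]
  exact (pow_right_strictMono₀ (by norm_num : (1:ℝ) < 2)).injective this

lemma sp_tsum : ∑' k : ℕ, (1 / 2 : ENNReal) ^ (k + 1) = 1 := by
  simp_rw [pow_succ]
  rw [ENNReal.tsum_mul_right, ENNReal.tsum_geometric]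
  have : (1 : ENNReal) - 1/2 = 1/2 := by
    rw [ENNReal.sub_eq_of_eq_add (by norm_num)]
    exact (ENNReal.add_halves 1).symm
  rw [this]
  simp [ENNReal.inv_div]
  rw [ENNReal.mul_inv_cancel] <;> norm_num

lemma sp_union {Ω : Type*} [MeasurableSpace Ω] {μ : Measure Ω} {X : Ω → ℝ}
    (h : IsStPetersburg μ X) : μ (⋃ k : ℕ, {ω | X ω = 2 ^ k}) = 1 := by
  rw [measure_iUnion (sp_disj h) (sp_meas h)]
  simp_rw [h.2]
  exact sp_tsum

lemma sp_summable : Summable (fun k : ℕ => ((k : ℝ) * Real.log 2) * (1/2) ^ (k+1)) := by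
  have h := summable_pow_mul_geometric_of_norm_lt_one (R := ℝ) 1
    (by rw [Real.norm_eq_abs, abs_of_nonneg] <;> norm_num : ‖(1/2 : ℝ)‖ < 1)
  refine ((h.mul_left (Real.log 2 / 2)).congr fun k => ?_)
  ring

lemma sp_rtsum : ∑' k : ℕ, ((k : ℝ) * Real.log 2) * (1/2) ^ (k+1) = Real.log 2 := by
  have h2 : ∑' k : ℕ, (k : ℝ) * (1/2) ^ k = 2 := by
    rw [tsum_coe_mul_geometric_of_norm_lt_one (by rw [Real.norm_eq_abs, abs_of_nonneg] <;> norm_num)]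
    norm_num
  calc ∑' k : ℕ, ((k : ℝ) * Real.log 2) * (1/2) ^ (k+1)
      = ∑' k : ℕ, (Real.log 2 / 2) * ((k : ℝ) * (1/2) ^ k) := by
        refine tsum_congr fun k => ?_; ring
    _ = (Real.log 2 / 2) * ∑' k : ℕ, (k : ℝ) * (1/2) ^ k := tsum_mul_left
    _ = Real.log 2 := by rw [h2]; ring

lemma sp_restrict {Ω : Type*} [MeasurableSpace Ω] {μ : Measure Ω} [IsProbabilityMeasure μ]
    {X : Ω → ℝ} (h : IsStPetersburg μ X) :
    μ.restrict (⋃ k : ℕ, {ω | X ω = 2 ^ k}) = μ := by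
  apply Measure.restrict_eq_self_of_ae_mem
  exact (mem_ae_iff_prob_eq_one (MeasurableSet.iUnion (sp_meas h))).2 (sp_union h)

lemma sp_half_pow (k : ℕ) : (1/2 : ENNReal) ^ (k+1) = ENNReal.ofReal ((1/2 : ℝ) ^ (k+1)) := by
  rw [ENNReal.ofReal_pow (by norm_num)]
  congr 1
  rw [ENNReal.ofReal_div_of_pos (by norm_num)]
  norm_num

lemma sp_log_integrable {Ω : Type*} [MeasurableSpace Ω] {μ : Measure Ω} [IsProbabilityMeasure μ]
    {X : Ω → ℝ} (h : IsStPetersburg μ X) : Integrable (fun ω => Real.log (X ω)) μ := by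
  have hmeas : Measurable fun ω => Real.log (X ω) := Real.measurable_log.comp h.1
  refine ⟨hmeas.aestronglyMeasurable, ?_⟩
  rw [HasFiniteIntegral, ← sp_restrict h,
    lintegral_iUnion (sp_meas h) (sp_disj h)]
  have hnn : ∀ k : ℕ, (0:ℝ) ≤ (k : ℝ) * Real.log 2 :=
    fun k => mul_nonneg (Nat.cast_nonneg k) (Real.log_nonneg one_le_two)
  have heq : ∀ k : ℕ, ∫⁻ ω in {ω | X ω = 2 ^ k}, ‖Real.log (X ω)‖ₑ ∂μ
      = ENNReal.ofReal ((k : ℝ) * Real.log 2) * (1/2) ^ (k+1) := by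
    intro k
    have hc : ∫⁻ ω in {ω | X ω = 2 ^ k}, ‖Real.log (X ω)‖ₑ ∂μ
        = ∫⁻ _ω in {ω | X ω = 2 ^ k}, ENNReal.ofReal ((k : ℝ) * Real.log 2) ∂μ :=
      setLIntegral_congr_fun (sp_meas h k) (fun ω hm => by
        have hx : X ω = 2 ^ k := hm
        rw [hx, Real.log_pow, Real.enorm_eq_ofReal (hnn k)])
    rw [hc, setLIntegral_const, h.2]
  simp_rw [heq, sp_half_pow, ← ENNReal.ofReal_mul (hnn _)]
  rw [← ENNReal.ofReal_tsum_of_nonneg (fun k => mul_nonneg (hnn k) (by positivity)) sp_summable]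
  exact ENNReal.ofReal_lt_top

lemma sp_log_integral {Ω : Type*} [MeasurableSpace Ω] {μ : Measure Ω} [IsProbabilityMeasure μ]
    {X : Ω → ℝ} (h : IsStPetersburg μ X) :
    ∫ ω, Real.log (X ω) ∂μ = Real.log 2 := by
  have hint : Integrable (fun ω => Real.log (X ω)) μ := sp_log_integrable h
  have hon : IntegrableOn (fun ω => Real.log (X ω)) (⋃ k : ℕ, {ω | X ω = 2 ^ k}) μ := by
    rw [IntegrableOn, sp_restrict h]; exact hint
  have step : ∫ ω, Real.log (X ω) ∂μ
      = ∑' k : ℕ, ∫ ω in {ω | X ω = 2 ^ k}, Real.log (X ω) ∂μ := by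
    conv_lhs => rw [← sp_restrict h]
    exact integral_iUnion (sp_meas h) (sp_disj h) hon
  have heq : ∀ k : ℕ, ∫ ω in {ω | X ω = 2 ^ k}, Real.log (X ω) ∂μ
      = ((k : ℝ) * Real.log 2) * (1/2 : ℝ) ^ (k+1) := by
    intro k
    have hc : Set.EqOn (fun ω => Real.log (X ω)) (fun _ => (k : ℝ) * Real.log 2)
        {ω | X ω = 2 ^ k} := fun ω hm => by
      have hx : X ω = 2 ^ k := hm
      simp only [hx, Real.log_pow]
    rw [setIntegral_congr_fun (sp_meas h k) hc, setIntegral_const, measureReal_def, h.2]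
    rw [smul_eq_mul, mul_comm]
    congr 1
    rw [ENNReal.toReal_pow]
    congr 1
    simp [ENNReal.toReal_div]
  rw [step]
  simp_rw [heq]
  exact sp_rtsum

/-- Khinchin's Theorem I: for i.i.d. St. Petersburg payoffs, for every `δ > 0` and
`η > 0` there is `N` such that with probability exceeding `1 - η`, for all `n > N`
the geometric mean `ρ_n = (X₁ ⋯ X_n)^{1/n}` satisfies `2 - δ < ρ_n < 2 + δ`. -/
theorem khinchin_theorem_I
    {Ω : Type*} [MeasurableSpace Ω] (μ : Measure Ω) [IsProbabilityMeasure μ]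
    (X : ℕ → Ω → ℝ)
    (hSP : ∀ i, IsStPetersburg μ (X i))
    (hIndep : iIndepFun X μ)
    (hIdent : ∀ i, IdentDistrib (X i) (X 0) μ μ) :
    ∀ δ > (0 : ℝ), ∀ η > (0 : ℝ), ∃ N : ℕ,
      (μ {ω | ∀ n > N,
          2 - δ < (∏ i ∈ Finset.range n, X i ω) ^ ((n : ℝ)⁻¹) ∧
          (∏ i ∈ Finset.range n, X i ω) ^ ((n : ℝ)⁻¹) < 2 + δ}).toReal > 1 - η := by
  intro δ hδ η hη
  -- the log variables
  have hYint : Integrable (Real.log ∘ X 0) μ := sp_log_integrable (hSP 0)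
  have hYindep : Pairwise (Function.onFun (IndepFun · · μ) fun i => Real.log ∘ X i) := fun i j hij =>
    (hIndep.indepFun hij).comp Real.measurable_log Real.measurable_log
  have hYident : ∀ i, IdentDistrib (Real.log ∘ X i) (Real.log ∘ X 0) μ μ := fun i =>
    (hIdent i).comp Real.measurable_log
  have hslln := strong_law_ae _ hYint hYindep hYident
  have hmean : μ[Real.log ∘ X 0] = Real.log 2 := sp_log_integral (hSP 0)
  rw [hmean] at hslln
  have hU : ∀ i, ∀ᵐ ω ∂μ, ∃ k : ℕ, X i ω = 2 ^ k := fun i => by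
    have hm := (mem_ae_iff_prob_eq_one
      (MeasurableSet.iUnion (sp_meas (hSP i)))).2 (sp_union (hSP i))
    filter_upwards [hm] with ω hw
    simpa [Set.mem_iUnion] using hw
  -- a.s. convergence of the geometric means to 2
  have hconv : ∀ᵐ ω ∂μ, Tendsto
      (fun n : ℕ => (∏ i ∈ Finset.range n, X i ω) ^ ((n : ℝ)⁻¹)) atTop (𝓝 2) := by
    filter_upwards [hslln, ae_all_iff.2 hU] with ω h1 h2
    have hx : ∀ i, 0 < X i ω := fun i => by
      obtain ⟨k, hk⟩ := h2 i; rw [hk]; positivity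
    have hexp : Tendsto
        (fun n : ℕ => Real.exp ((n : ℝ)⁻¹ • ∑ i ∈ Finset.range n, Real.log (X i ω)))
        atTop (𝓝 2) := by
      have := (Real.continuous_exp.tendsto (Real.log 2)).comp h1
      simpa [Function.comp_def, Real.exp_log two_pos] using this
    refine hexp.congr' ?_
    filter_upwards [eventually_gt_atTop 0] with n hn
    have hp : 0 < ∏ i ∈ Finset.range n, X i ω := Finset.prod_pos fun i _ => hx i
    rw [Real.rpow_def_of_pos hp, Real.log_prod (fun i _ => (hx i).ne')]
    simp [smul_eq_mul, mul_comm]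
  -- the events
  set f : ℕ → Ω → ℝ := fun n ω => (∏ i ∈ Finset.range n, X i ω) ^ ((n : ℝ)⁻¹) with hf
  have hfmeas : ∀ n, Measurable (f n) := fun n =>
    (Real.continuous_rpow_const (by positivity : (0:ℝ) ≤ (n : ℝ)⁻¹)).measurable.comp
      (Finset.measurable_prod _ fun i _ => (hSP i).1)
  set E : ℕ → Set Ω := fun N => {ω | ∀ n > N, 2 - δ < f n ω ∧ f n ω < 2 + δ} with hE
  have hEmeas : ∀ N, MeasurableSet (E N) := by
    intro N
    have : E N = ⋂ n, ⋂ (_ : n > N), ({ω | 2 - δ < f n ω} ∩ {ω | f n ω < 2 + δ}) := by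
      ext ω; simp [hE, Set.mem_iInter, Set.mem_setOf_eq]
    rw [this]
    exact MeasurableSet.iInter fun n => MeasurableSet.iInter fun _ =>
      (measurableSet_lt measurable_const (hfmeas n)).inter
        (measurableSet_lt (hfmeas n) measurable_const)
  have hmono : Monotone E := fun N M hNM ω hw n hn => hw n (lt_of_le_of_lt hNM hn)
  have hUnion : μ (⋃ N, E N) = 1 := by
    refine (mem_ae_iff_prob_eq_one (MeasurableSet.iUnion hEmeas)).1 ?_
    filter_upwards [hconv] with ω hw
    have h1 := hw.eventually (eventually_gt_nhds (by linarith : 2 - δ < 2))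
    have h2 := hw.eventually (eventually_lt_nhds (by linarith : (2 : ℝ) < 2 + δ))
    obtain ⟨N, hN⟩ := eventually_atTop.1 (h1.and h2)
    exact Set.mem_iUnion.2 ⟨N, fun n hn => hN n hn.le⟩
  have htend : Tendsto (fun N => μ (E N)) atTop (𝓝 1) := by
    have := tendsto_measure_iUnion_atTop (μ := μ) hmono
    rwa [hUnion] at this
  have htend' : Tendsto (fun N => (μ (E N)).toReal) atTop (𝓝 1) := by
    simpa [Function.comp_def] using (ENNReal.tendsto_toReal (by norm_num : (1 : ENNReal) ≠ ⊤)).comp htend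
  obtain ⟨N, hN⟩ := (htend'.eventually (eventually_gt_nhds (by linarith : 1 - η < 1))).exists
  exact ⟨N, hN⟩
end

section
/- Let (X_i)_{i≥1} be i.i.d. St. Petersburg payoffs and let σ_n = (X_1 + X_2 + ⋯ + X_n)/n denote the arithmetic mean of the first n payoffs. Then for every δ > 0 and every η > 0 there exists a natural number N = N(δ, η) such that the probability of the event { for all n > N, (log n)^{1−δ} < σ_n < (log n)^{1+δ} } exceeds 1 − η; that is, with probability arbitrarily close to one, the order of growth of the arithmetic mean of the first n winnings lies between (log n)^{1−δ} and (log n)^{1+δ}. -/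
open MeasureTheory ProbabilityTheory

section Aux
open Finset Filter

namespace KhinchinSP

/-- indicator of the value `2^k` -/
noncomputable def gk (k : ℕ) (x : ℝ) : ℝ := if x = 2 ^ k then 1 else 0

/-- truncated payoff -/
noncomputable def gW (K : ℕ) (x : ℝ) : ℝ := ∑ k ∈ range (K + 1), 2 ^ k * gk k x

lemma measurable_gk (k : ℕ) : Measurable (gk k) := by
  unfold gk
  exact Measurable.ite (measurableSet_eq) measurable_const measurable_const

lemma measurable_gW (K : ℕ) : Measurable (gW K) :=
  Finset.measurable_sum _ fun k _ => (measurable_gk k).const_mul _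

lemma gk_nonneg (k : ℕ) (x : ℝ) : 0 ≤ gk k x := by unfold gk; positivity

lemma pow_two_inj : Function.Injective (fun k : ℕ => (2:ℝ) ^ k) :=
  pow_right_injective₀ (by norm_num) (by norm_num)

lemma gk_of_ne {k : ℕ} {x : ℝ} (h : x ≠ 2 ^ k) : gk k x = 0 := by simp [gk, h]

lemma gk_self (k : ℕ) : gk k (2 ^ k) = 1 := by simp [gk]

lemma gW_eq_self {j K : ℕ} (hj : j ≤ K) : gW K ((2:ℝ) ^ j) = 2 ^ j := by
  unfold gW
  rw [Finset.sum_eq_single j]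
  · rw [gk_self, mul_one]
  · intro k hk hkj
    rw [gk_of_ne (fun h => hkj (pow_two_inj h).symm), mul_zero]
  · intro h; exact absurd (Finset.mem_range.2 (Nat.lt_succ_of_le hj)) h

lemma gW_of_not {K : ℕ} {x : ℝ} (h : ∀ j ≤ K, x ≠ 2 ^ j) : gW K x = 0 := by
  unfold gW
  refine Finset.sum_eq_zero fun k hk => ?_
  rw [gk_of_ne (h k (Nat.lt_succ_iff.1 (Finset.mem_range.1 hk))), mul_zero]

lemma gW_cases (K : ℕ) (x : ℝ) : gW K x = 0 ∨ ∃ j ≤ K, x = 2 ^ j ∧ gW K x = x := by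
  by_cases h : ∃ j ≤ K, x = (2:ℝ) ^ j
  · obtain ⟨j, hj, rfl⟩ := h
    exact Or.inr ⟨j, hj, rfl, gW_eq_self hj⟩
  · push_neg at h
    exact Or.inl (gW_of_not h)

lemma gW_nonneg (K : ℕ) (x : ℝ) : 0 ≤ gW K x :=
  Finset.sum_nonneg fun k _ => mul_nonneg (by positivity) (gk_nonneg k x)

lemma gW_le_pow (K : ℕ) (x : ℝ) : gW K x ≤ 2 ^ K := by
  rcases gW_cases K x with h | ⟨j, hj, hx, h⟩
  · rw [h]; positivity
  · rw [h, hx]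
    exact pow_le_pow_right₀ one_le_two hj

lemma gW_le_self {K : ℕ} {x : ℝ} (hx : 0 ≤ x) : gW K x ≤ x := by
  rcases gW_cases K x with h | ⟨j, hj, hxv, h⟩
  · rw [h]; exact hx
  · rw [h]

lemma gW_eq_of_le {K j : ℕ} (h2 : (2:ℝ) ^ j ≤ 2 ^ K) : gW K ((2:ℝ)^j) = 2 ^ j :=
  gW_eq_self (by exact_mod_cast (pow_le_pow_iff_right₀ one_lt_two).1 h2)

lemma gW_sq (K : ℕ) (x : ℝ) : (gW K x) ^ 2 = ∑ k ∈ range (K + 1), 4 ^ k * gk k x := by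
  by_cases h : ∃ j ≤ K, x = (2:ℝ) ^ j
  · obtain ⟨j, hj, rfl⟩ := h
    rw [gW_eq_self hj, Finset.sum_eq_single j]
    · rw [gk_self, mul_one, ← pow_mul']
      norm_num [pow_mul]
    · intro k hk hkj
      rw [gk_of_ne (fun h => hkj (pow_two_inj h).symm), mul_zero]
    · intro h; exact absurd (Finset.mem_range.2 (Nat.lt_succ_of_le hj)) h
  · push_neg at h
    rw [gW_of_not h]
    rw [Finset.sum_eq_zero, pow_two, mul_zero]
    intro k hk
    rw [gk_of_ne (h k (Nat.lt_succ_iff.1 (Finset.mem_range.1 hk))), mul_zero]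

variable {Ω : Type*} [MeasurableSpace Ω] {μ : Measure Ω} [IsProbabilityMeasure μ]
  {X : ℕ → Ω → ℝ}

lemma memℒp_comp {g : ℝ → ℝ} (hg : Measurable g) (B : ℝ) (hB : ∀ x, |g x| ≤ B)
    {i : ℕ} (hX : Measurable (X i)) : MemLp (fun ω => g (X i ω)) 2 μ :=
  MemLp.of_bound ((hg.comp hX).aestronglyMeasurable) B (ae_of_all _ fun ω => hB _)

/-- Generic Chebyshev bound for sums of independent identically-behaved compositions. -/
lemma cheb (hX : ∀ i, Measurable (X i))
    (hIndep : iIndepFun X μ)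
    {g : ℝ → ℝ} (hg : Measurable g) (B : ℝ) (hB : ∀ x, |g x| ≤ B)
    {e v : ℝ} (he : ∀ i, ∫ ω, g (X i ω) ∂μ = e)
    (hv : ∀ i, variance (fun ω => g (X i ω)) μ ≤ v) (hv0 : 0 ≤ v)
    (n : ℕ) {c : ℝ} (hc : 0 < c) :
    μ {ω | c ≤ |(∑ i ∈ range n, g (X i ω)) - n * e|}
      ≤ ENNReal.ofReal (n * v / c ^ 2) := by
  have hmem : ∀ i : ℕ, MemLp (fun ω => g (X i ω)) 2 μ := fun i => memℒp_comp hg B hB (hX i)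
  have hint : ∀ i : ℕ, Integrable (fun ω => g (X i ω)) μ :=
    fun i => (hmem i).integrable (by norm_num)
  set S : Ω → ℝ := ∑ i ∈ range n, (fun ω => g (X i ω)) with hS
  have hSmem : MemLp S 2 μ := memLp_finsetSum' _ (fun i _ => hmem i)
  have hSapp : ∀ ω, S ω = ∑ i ∈ range n, g (X i ω) := by
    intro ω; rw [hS, Finset.sum_apply]
  have hindepcomp : iIndepFun (fun i => g ∘ X i) μ :=
    hIndep.comp (fun _ => g) (fun _ => hg)
  have hES : μ[S] = n * e := by
    have : ∫ ω, S ω ∂μ = ∫ ω, ∑ i ∈ range n, g (X i ω) ∂μ := by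
      congr 1; ext ω; exact hSapp ω
    rw [this, integral_finset_sum _ (fun i _ => hint i)]
    simp [he, mul_comm]
  have hVS : variance S μ ≤ n * v := by
    rw [hS, IndepFun.variance_sum (fun i _ => hmem i)
      (fun i _ j _ hij => hindepcomp.indepFun hij)]
    calc ∑ i ∈ range n, variance (fun ω => g (X i ω)) μ ≤ ∑ _i ∈ range n, v :=
          Finset.sum_le_sum fun i _ => hv i
      _ = n * v := by simp [mul_comm]
  calc μ {ω | c ≤ |(∑ i ∈ range n, g (X i ω)) - n * e|}
      = μ {ω | c ≤ |S ω - μ[S]|} := by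
        congr 1; ext ω; simp only [Set.mem_setOf_eq, hSapp ω, hES]
    _ ≤ ENNReal.ofReal (variance S μ / c ^ 2) := meas_ge_le_variance_div_sq hSmem hc
    _ ≤ ENNReal.ofReal (n * v / c ^ 2) :=
        ENNReal.ofReal_le_ofReal (by gcongr)

lemma tsum_half : ∑' j : ℕ, (1 / 2 : ENNReal) ^ (j + 1) = 1 := by
  simp_rw [pow_succ]
  rw [ENNReal.tsum_mul_right, ENNReal.tsum_geometric]
  rw [one_div, ENNReal.one_sub_inv_two]
  simp only [inv_inv]
  exact ENNReal.mul_inv_cancel (by norm_num) (by norm_num)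

variable {Ω : Type*} [MeasurableSpace Ω] {μ : Measure Ω} [IsProbabilityMeasure μ]
  {f : Ω → ℝ} (hf : Measurable f)
  (hμk : ∀ k : ℕ, μ {ω | f ω = 2 ^ k} = (1 / 2 : ENNReal) ^ (k + 1))

include hf hμk

lemma toReal_prob (k : ℕ) : (μ {ω | f ω = 2 ^ k}).toReal = (1 / 2 : ℝ) ^ (k + 1) := by
  rw [hμk k]
  simp [ENNReal.toReal_pow]

lemma integral_gk (k : ℕ) : ∫ ω, gk k (f ω) ∂μ = (1 / 2 : ℝ) ^ (k + 1) := by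
  have hset : MeasurableSet {ω | f ω = 2 ^ k} := hf (measurableSet_singleton _)
  have heq : (fun ω => gk k (f ω))
      = Set.indicator {ω | f ω = 2 ^ k} (fun _ => (1:ℝ)) := by
    ext ω
    by_cases h : f ω = 2 ^ k <;> simp [gk, h, Set.indicator]
  rw [heq, integral_indicator_const _ hset, measureReal_def, toReal_prob hf hμk k, smul_eq_mul, mul_one]

lemma integrable_gk (k : ℕ) : Integrable (fun ω => gk k (f ω)) μ := by
  have hset : MeasurableSet {ω | f ω = 2 ^ k} := hf (measurableSet_singleton _)
  have heq : (fun ω => gk k (f ω))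
      = Set.indicator {ω | f ω = 2 ^ k} (fun _ => (1:ℝ)) := by
    ext ω
    by_cases h : f ω = 2 ^ k <;> simp [gk, h, Set.indicator]
  rw [heq]
  exact (integrable_const (1:ℝ)).indicator hset

omit hf hμk in
lemma sq_gk (k : ℕ) (x : ℝ) : gk k x ^ 2 = gk k x := by
  unfold gk; split <;> norm_num

lemma variance_gk (k : ℕ) : variance (fun ω => gk k (f ω)) μ ≤ (1 / 2 : ℝ) ^ (k + 1) := by
  refine le_trans (variance_le_expectation_sq
    (((measurable_gk k).comp hf).aestronglyMeasurable)) ?_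
  have : (fun ω => gk k (f ω)) ^ 2 = fun ω => gk k (f ω) := by
    ext ω; simp [sq_gk]
  rw [this, integral_gk hf hμk k]

lemma integral_gW (K : ℕ) : ∫ ω, gW K (f ω) ∂μ = (K + 1) / 2 := by
  unfold gW
  rw [integral_finset_sum _ (fun k _ => (integrable_gk hf hμk k).const_mul _)]
  have : ∀ k ∈ range (K + 1), ∫ ω, 2 ^ k * gk k (f ω) ∂μ = 1 / 2 := by
    intro k _
    rw [integral_const_mul, integral_gk hf hμk k, pow_succ, ← mul_assoc, ← mul_pow]
    norm_num
  rw [Finset.sum_congr rfl this, Finset.sum_const, card_range, nsmul_eq_mul]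
  push_cast; ring

lemma integral_gW_sq (K : ℕ) : ∫ ω, gW K (f ω) ^ 2 ∂μ ≤ (2:ℝ) ^ K := by
  have heq : ∀ ω, gW K (f ω) ^ 2 = ∑ k ∈ range (K + 1), 4 ^ k * gk k (f ω) :=
    fun ω => gW_sq K (f ω)
  rw [show (fun ω => gW K (f ω) ^ 2) = fun ω => ∑ k ∈ range (K + 1), 4 ^ k * gk k (f ω)
    from funext heq]
  rw [integral_finset_sum _ (fun k _ => (integrable_gk hf hμk k).const_mul _)]
  have h1 : ∀ k ∈ range (K + 1), ∫ ω, 4 ^ k * gk k (f ω) ∂μ = 2 ^ k / 2 := by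
    intro k _
    rw [integral_const_mul, integral_gk hf hμk k, pow_succ, ← mul_assoc, ← mul_pow]
    norm_num
    ring
  rw [Finset.sum_congr rfl h1, ← Finset.sum_div]
  rw [geom_sum_eq (by norm_num : (2:ℝ) ≠ 1)]
  have : (0:ℝ) ≤ 2 ^ (K+1) := by positivity
  rw [div_le_iff₀ (by norm_num : (0:ℝ) < 2)]
  have h2 : (2:ℝ) ^ (K + 1) = 2 ^ K * 2 := by ring
  nlinarith [pow_pos (by norm_num : (0:ℝ) < 2) K]

lemma variance_gW (K : ℕ) : variance (fun ω => gW K (f ω)) μ ≤ (2:ℝ) ^ K := by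
  refine le_trans (variance_le_expectation_sq
    (((measurable_gW K).comp hf).aestronglyMeasurable)) ?_
  have : (fun ω => gW K (f ω)) ^ 2 = fun ω => gW K (f ω) ^ 2 := by
    ext ω; simp
  rw [this]
  exact integral_gW_sq hf hμk K

lemma measure_iUnion_values : μ (⋃ j : ℕ, {ω | f ω = 2 ^ j}) = 1 := by
  have hdisj : Pairwise (Function.onFun Disjoint fun j : ℕ => {ω | f ω = 2 ^ j}) := by
    intro i j hij
    refine Set.disjoint_left.2 fun ω hi hj => ?_
    exact hij (pow_two_inj (by rw [← hi, ← hj] : (2:ℝ)^i = 2^j))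
  rw [measure_iUnion hdisj (fun j => hf (measurableSet_singleton _))]
  simp_rw [hμk]
  exact tsum_half

lemma ae_value : ∀ᵐ ω ∂μ, ∃ j : ℕ, f ω = 2 ^ j := by
  have h := measure_iUnion_values hf hμk
  have hms : MeasurableSet (⋃ j : ℕ, {ω | f ω = 2 ^ j}) :=
    MeasurableSet.iUnion fun j => hf (measurableSet_singleton _)
  have : μ (⋃ j : ℕ, {ω | f ω = 2 ^ j})ᶜ = 0 := by
    rw [measure_compl hms (measure_ne_top μ _), h, measure_univ, tsub_self]
  filter_upwards [measure_eq_zero_iff_ae_notMem.1 this] with ω hω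
  simpa using hω

lemma measure_tail (K : ℕ) : μ {ω | (2:ℝ) ^ K < f ω} ≤ (1 / 2 : ENNReal) ^ (K + 1) := by
  have hsub : {ω | (2:ℝ) ^ K < f ω}
      ⊆ (⋃ j : ℕ, {ω | f ω = 2 ^ (K + 1 + j)}) ∪ (⋃ j : ℕ, {ω | f ω = 2 ^ j})ᶜ := by
    intro ω hω
    by_cases h : ∃ j : ℕ, f ω = 2 ^ j
    · obtain ⟨j, hj⟩ := h
      left
      have hω' : (2:ℝ) ^ K < f ω := hω
      rw [hj] at hω'
      have hKj : K < j := by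
        by_contra hc
        push_neg at hc
        exact absurd hω' (not_lt.2 (pow_le_pow_right₀ one_le_two hc))
      exact Set.mem_iUnion.2 ⟨j - (K + 1), by rw [Set.mem_setOf_eq, hj]; congr 1; omega⟩
    · right; simpa using h
  have hms : MeasurableSet (⋃ j : ℕ, {ω | f ω = 2 ^ j}) :=
    MeasurableSet.iUnion fun j => hf (measurableSet_singleton _)
  have hnull : μ (⋃ j : ℕ, {ω | f ω = 2 ^ j})ᶜ = 0 := by
    rw [measure_compl hms (measure_ne_top μ _), measure_iUnion_values hf hμk,
      measure_univ, tsub_self]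
  calc μ {ω | (2:ℝ) ^ K < f ω}
      ≤ μ (⋃ j : ℕ, {ω | f ω = 2 ^ (K + 1 + j)}) + μ (⋃ j : ℕ, {ω | f ω = 2 ^ j})ᶜ :=
        le_trans (measure_mono hsub) (measure_union_le _ _)
    _ = μ (⋃ j : ℕ, {ω | f ω = 2 ^ (K + 1 + j)}) := by rw [hnull, add_zero]
    _ ≤ ∑' j : ℕ, μ {ω | f ω = 2 ^ (K + 1 + j)} := measure_iUnion_le _
    _ = ∑' j : ℕ, (1/2 : ENNReal) ^ (K + 1 + j + 1) := by simp_rw [hμk]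
    _ ≤ (1 / 2 : ENNReal) ^ (K + 1) := by
        have : ∀ j : ℕ, (1/2 : ENNReal) ^ (K + 1 + j + 1)
            = (1/2 : ENNReal) ^ (K + 1) * (1/2) ^ (j + 1) := by
          intro j
          rw [← pow_add, add_assoc]
        simp_rw [this]
        rw [ENNReal.tsum_mul_left, tsum_half]
        exact le_of_eq (mul_one _)

end KhinchinSP


namespace KhinchinSP

noncomputable def pk (k : ℕ) : ℝ := (1/2)^(k+1)
noncomputable def Km (δ : ℝ) (m : ℕ) : ℕ := 2*m + 2 + ⌈(1+δ) * Real.logb 2 m⌉₊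
noncomputable def target (δ : ℝ) (m : ℕ) : ℝ := 4^m * (2*m*Real.log 2) ^ (1+δ)

lemma pk_pos (k : ℕ) : 0 < pk k := by unfold pk; positivity

lemma quad (a q : ℝ) (ha : 0 < a) (hq : 0 < q) : a*q/(a*q/2)^2 = 4/(a*q) := by
  field_simp; ring

lemma calc1 {m k : ℕ} (hk : k ≤ m) :
    (4:ℝ)^m * pk k / ((4:ℝ)^m * pk k / 2)^2 ≤ 8 / 2^m := by
  have h4 : (4:ℝ)^m = 2^m * 2^m := by rw [← mul_pow]; norm_num
  have h2m : (0:ℝ) < 2^m := by positivity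
  have hle : (2:ℝ)^(k+1) ≤ 2^(m+1) := pow_le_pow_right₀ one_le_two (by omega)
  have hq : pk k = ((2:ℝ)^(k+1))⁻¹ := by
    unfold pk; rw [one_div, inv_pow]
  rw [quad _ _ (by positivity) (pk_pos k), hq, h4]
  rw [div_le_div_iff₀ (by positivity) h2m]
  have hge : ((2:ℝ)^(m+1))⁻¹ ≤ ((2:ℝ)^(k+1))⁻¹ := by
    apply inv_anti₀ (by positivity) hle
  calc (4:ℝ) * 2^m = 2^m * 2^m * ((2:ℝ)^(m+1))⁻¹ * 8 := by
        rw [pow_succ]; field_simp; ring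
    _ ≤ 2^m * 2^m * ((2:ℝ)^(k+1))⁻¹ * 8 := by gcongr
    _ = 8 * (2 ^ m * 2 ^ m * ((2:ℝ) ^ (k + 1))⁻¹) := by ring

lemma two_mul_log_two : (1:ℝ) ≤ 2 * Real.log 2 := by
  nlinarith [Real.log_two_gt_d9]

lemma target_pos {δ : ℝ} {m : ℕ} (hm : 1 ≤ m) : 0 < target δ m := by
  unfold target
  have : (0:ℝ) < 2*m*Real.log 2 := by
    have := Real.log_pos (by norm_num : (1:ℝ) < 2)
    have hm' : (0:ℝ) < m := by exact_mod_cast hm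
    positivity
  positivity

lemma pow_ceil_le {δ : ℝ} (hδ : 0 < δ) {m : ℕ} (hm : 1 ≤ m) :
    (2:ℝ)^(⌈(1+δ) * Real.logb 2 m⌉₊) ≤ 2 * (m:ℝ)^(1+δ) := by
  have hm' : (0:ℝ) < m := by exact_mod_cast hm
  have hlb : 0 ≤ (1+δ) * Real.logb 2 m := by
    apply mul_nonneg (by linarith)
    exact Real.logb_nonneg (by norm_num) (by exact_mod_cast hm)
  have hceil : (⌈(1+δ) * Real.logb 2 m⌉₊ : ℝ) < (1+δ) * Real.logb 2 m + 1 :=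
    Nat.ceil_lt_add_one hlb
  have h1 : (2:ℝ)^(⌈(1+δ) * Real.logb 2 m⌉₊) = (2:ℝ)^((⌈(1+δ) * Real.logb 2 m⌉₊ : ℝ)) := by
    rw [Real.rpow_natCast]
  rw [h1]
  have h2 : (2:ℝ)^((⌈(1+δ) * Real.logb 2 m⌉₊ : ℝ)) ≤ (2:ℝ)^((1+δ) * Real.logb 2 m + 1) :=
    Real.rpow_le_rpow_of_exponent_le one_le_two hceil.le
  refine le_trans h2 (le_of_eq ?_)
  rw [Real.rpow_add (by norm_num), Real.rpow_one, mul_comm ((1:ℝ)+δ), Real.rpow_mul (by norm_num),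
    Real.rpow_logb (by norm_num) (by norm_num) hm']
  ring

lemma rpow_le_ceil_pow {δ : ℝ} (hδ : 0 < δ) {m : ℕ} (hm : 1 ≤ m) :
    (m:ℝ)^(1+δ) ≤ (2:ℝ)^(⌈(1+δ) * Real.logb 2 m⌉₊) := by
  have hm' : (0:ℝ) < m := by exact_mod_cast hm
  have hceil : (1+δ) * Real.logb 2 m ≤ (⌈(1+δ) * Real.logb 2 m⌉₊ : ℝ) := Nat.le_ceil _
  have h2 : (2:ℝ)^((1+δ) * Real.logb 2 m) ≤ (2:ℝ)^((⌈(1+δ) * Real.logb 2 m⌉₊ : ℝ)) :=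
    Real.rpow_le_rpow_of_exponent_le one_le_two hceil
  rw [Real.rpow_natCast] at h2
  refine le_trans (le_of_eq ?_) h2
  rw [mul_comm ((1:ℝ)+δ), Real.rpow_mul (by norm_num),
    Real.rpow_logb (by norm_num) (by norm_num) hm']

lemma rpow_m_pos {δ : ℝ} {m : ℕ} (hm : 1 ≤ m) : (0:ℝ) < (m:ℝ)^(1+δ) := by
  have hm' : (0:ℝ) < m := by exact_mod_cast hm
  positivity

lemma m_rpow_le_target_base {δ : ℝ} (hδ : 0 < δ) {m : ℕ} (hm : 1 ≤ m) :
    (m:ℝ)^(1+δ) ≤ (2*m*Real.log 2)^(1+δ) := by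
  have hm' : (0:ℝ) < m := by exact_mod_cast hm
  apply Real.rpow_le_rpow (le_of_lt hm') _ (by linarith)
  nlinarith [two_mul_log_two, hm']

lemma calc2 {δ : ℝ} (hδ : 0 < δ) {m : ℕ} (hm : 1 ≤ m) :
    (4:ℝ)^(m+1) * 2^(Km δ m) / (target δ m / 2)^2 ≤ 128 / (m:ℝ)^(1+δ) := by
  set c := ⌈(1+δ) * Real.logb 2 m⌉₊ with hc
  set A := (m:ℝ)^(1+δ) with hA
  set B := (2*(m:ℝ)*Real.log 2)^(1+δ) with hB
  set P := (4:ℝ)^m with hP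
  have hApos : 0 < A := rpow_m_pos hm
  have hPpos : 0 < P := by positivity
  have hAB : A ≤ B := m_rpow_le_target_base hδ hm
  have hBpos : 0 < B := lt_of_lt_of_le hApos hAB
  have h2c : (2:ℝ)^c ≤ 2*A := pow_ceil_le hδ hm
  have hKm : (2:ℝ)^(Km δ m) = 4 * P * 2^c := by
    unfold Km
    rw [← hc, pow_add, pow_add, hP]
    have : (2:ℝ)^(2*m) = 4^m := by rw [pow_mul]; norm_num
    rw [this]; ring
  have htg : target δ m = P * B := by unfold target; rw [hP, hB]
  rw [hKm, htg, div_le_div_iff₀ (by positivity) hApos]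
  have key : (4:ℝ)^(m+1) * (4 * P * 2^c) * A ≤ 32 * P^2 * A * A := by
    have h4 : (4:ℝ)^(m+1) = 4 * P := by rw [hP, pow_succ]; ring
    rw [h4]
    calc 4 * P * (4 * P * 2^c) * A = 16 * P^2 * 2^c * A := by ring
      _ ≤ 16 * P^2 * (2*A) * A := by gcongr
      _ = 32 * P^2 * A * A := by ring
  refine le_trans key ?_
  calc 32 * P^2 * A * A ≤ 32 * P^2 * B * B := by gcongr
    _ = 128 * (P * B / 2)^2 := by ring

end KhinchinSP

namespace KhinchinSP

open Finset

variable {Ω : Type*} [MeasurableSpace Ω] {μ : Measure Ω} [IsProbabilityMeasure μ]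
  {X : ℕ → Ω → ℝ}

def BadL (X : ℕ → Ω → ℝ) (m : ℕ) : Set Ω :=
  ⋃ k ∈ Finset.range (m+1),
    {ω | ((4^m : ℕ):ℝ) * pk k / 2
      ≤ |(∑ i ∈ Finset.range (4^m), gk k (X i ω)) - ((4^m : ℕ):ℝ) * pk k|}

def BadU1 (X : ℕ → Ω → ℝ) (δ : ℝ) (m : ℕ) : Set Ω :=
  ⋃ i ∈ Finset.range (4^(m+1)), {ω | (2:ℝ)^(Km δ m) < X i ω}

def BadU2 (X : ℕ → Ω → ℝ) (δ : ℝ) (m : ℕ) : Set Ω :=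
  {ω | target δ m / 2
    ≤ |(∑ i ∈ Finset.range (4^(m+1)), gW (Km δ m) (X i ω))
        - ((4^(m+1) : ℕ):ℝ) * (((Km δ m : ℕ):ℝ) + 1) / 2|}

lemma gk_abs (k : ℕ) (x : ℝ) : |gk k x| ≤ 1 := by
  rw [abs_of_nonneg (gk_nonneg k x)]
  unfold gk; split <;> norm_num

lemma gW_abs (K : ℕ) (x : ℝ) : |gW K x| ≤ 2^K := by
  rw [abs_of_nonneg (gW_nonneg K x)]
  exact gW_le_pow K x

lemma cast_four_pow (m : ℕ) : ((4^m : ℕ) : ℝ) = (4:ℝ)^m := by push_cast; ring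

lemma badL_bound (hX : ∀ i, Measurable (X i))
    (hμk : ∀ i k, μ {ω | X i ω = 2 ^ k} = (1 / 2 : ENNReal) ^ (k + 1))
    (hIndep : iIndepFun X μ) (m : ℕ) :
    μ (BadL X m) ≤ ENNReal.ofReal (((m:ℝ)+1) * (8 / 2^m)) := by
  refine le_trans (measure_biUnion_finset_le _ _) ?_
  have hbound : ∀ k ∈ range (m+1),
      μ {ω | ((4^m : ℕ):ℝ) * pk k / 2
        ≤ |(∑ i ∈ Finset.range (4^m), gk k (X i ω)) - ((4^m : ℕ):ℝ) * pk k|}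
      ≤ ENNReal.ofReal (8 / 2^m) := by
    intro k hk
    have hk' : k ≤ m := Nat.lt_succ_iff.1 (mem_range.1 hk)
    have hc : (0:ℝ) < ((4^m : ℕ):ℝ) * pk k / 2 := by
      rw [cast_four_pow]
      have := pk_pos k
      positivity
    refine le_trans (cheb hX hIndep (measurable_gk k) 1 (gk_abs k)
      (fun i => integral_gk (hX i) (hμk i) k)
      (fun i => variance_gk (hX i) (hμk i) k) (le_of_lt (pk_pos k)) (4^m) hc) ?_
    apply ENNReal.ofReal_le_ofReal
    rw [cast_four_pow]
    exact calc1 hk'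
  refine le_trans (Finset.sum_le_sum hbound) ?_
  rw [Finset.sum_const, card_range, nsmul_eq_mul]
  rw [← ENNReal.ofReal_natCast (m+1), ← ENNReal.ofReal_mul (by positivity)]
  apply ENNReal.ofReal_le_ofReal
  push_cast
  exact le_rfl

lemma half_ofReal : (ENNReal.ofReal (1/2 : ℝ)) = 1/2 := by
  rw [one_div, ENNReal.ofReal_inv_of_pos (by norm_num), ENNReal.ofReal_ofNat, one_div]

lemma half_pow (j : ℕ) : (1/2 : ENNReal)^j = ENNReal.ofReal ((1/2:ℝ)^j) := by
  rw [ENNReal.ofReal_pow (by norm_num), half_ofReal]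

lemma real_eq1 (m c : ℕ) : (4:ℝ)^(m+1) * (1/2)^(2*m+2+c+1) = (1/2)^(c+1) := by
  have he : 2*m+2+c+1 = 2*(m+1)+(c+1) := by ring
  rw [he, pow_add (1/2 : ℝ), pow_mul (1/2 : ℝ), ← mul_assoc]
  have h1 : (4:ℝ)^(m+1) * ((1/2:ℝ)^2)^(m+1) = 1 := by
    rw [← mul_pow]; norm_num
  rw [h1, one_mul]

lemma badU1_bound (hX : ∀ i, Measurable (X i))
    (hμk : ∀ i k, μ {ω | X i ω = 2 ^ k} = (1 / 2 : ENNReal) ^ (k + 1))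
    (δ : ℝ) (m : ℕ) :
    μ (BadU1 X δ m) ≤ ENNReal.ofReal ((1/2:ℝ)^(⌈(1+δ) * Real.logb 2 m⌉₊ + 1)) := by
  refine le_trans (measure_biUnion_finset_le _ _) ?_
  have hbound : ∀ i ∈ range (4^(m+1)),
      μ {ω | (2:ℝ)^(Km δ m) < X i ω} ≤ (1/2 : ENNReal)^(Km δ m + 1) :=
    fun i _ => measure_tail (hX i) (hμk i) (Km δ m)
  refine le_trans (Finset.sum_le_sum hbound) ?_
  rw [Finset.sum_const, card_range, nsmul_eq_mul, half_pow,
    ← ENNReal.ofReal_natCast (4^(m+1)), ← ENNReal.ofReal_mul (by positivity)]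
  apply ENNReal.ofReal_le_ofReal
  rw [cast_four_pow]
  unfold Km
  rw [real_eq1]

lemma badU2_bound (hX : ∀ i, Measurable (X i))
    (hμk : ∀ i k, μ {ω | X i ω = 2 ^ k} = (1 / 2 : ENNReal) ^ (k + 1))
    (hIndep : iIndepFun X μ)
    {δ : ℝ} (hδ : 0 < δ) {m : ℕ} (hm : 1 ≤ m) :
    μ (BadU2 X δ m) ≤ ENNReal.ofReal (128 / (m:ℝ)^(1+δ)) := by
  have hc : (0:ℝ) < target δ m / 2 := by
    have := target_pos (δ := δ) hm; linarith
  have h := cheb hX hIndep (measurable_gW (Km δ m)) (2^(Km δ m)) (gW_abs (Km δ m))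
    (fun i => integral_gW (hX i) (hμk i) (Km δ m))
    (fun i => variance_gW (hX i) (hμk i) (Km δ m)) (by positivity) (4^(m+1)) hc
  refine le_trans (le_of_eq ?_) (le_trans h ?_)
  · unfold BadU2
    congr 1
    ext ω
    rw [Set.mem_setOf_eq, Set.mem_setOf_eq, mul_div_assoc]
  · apply ENNReal.ofReal_le_ofReal
    rw [cast_four_pow]
    exact calc2 hδ hm

end KhinchinSP

namespace KhinchinSP

open Finset Filter

variable {Ω : Type*} [MeasurableSpace Ω] {μ : Measure Ω} [IsProbabilityMeasure μ]
  {X : ℕ → Ω → ℝ}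

lemma summable1 : Summable (fun m : ℕ => ((m:ℝ)+1) * (8 / 2^m)) := by
  have h : (fun m : ℕ => ((m:ℝ)+1) * (8 / 2^m))
      = fun m : ℕ => 8*((m:ℝ)^1*(1/2)^m) + 8*((1/2:ℝ)^m) := by
    ext m
    rw [div_eq_mul_inv, ← inv_pow]
    rw [one_div]
    ring
  rw [h]
  refine Summable.add (Summable.mul_left 8 ?_) (Summable.mul_left 8 ?_)
  · have hr : ‖(1/2:ℝ)‖ < 1 := by
      rw [Real.norm_eq_abs, abs_of_pos (by norm_num : (0:ℝ) < 1/2)]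
      norm_num
    exact summable_pow_mul_geometric_of_norm_lt_one 1 hr
  · exact summable_geometric_of_lt_one (by norm_num) (by norm_num)

lemma tsumL (hX : ∀ i, Measurable (X i))
    (hμk : ∀ i k, μ {ω | X i ω = 2 ^ k} = (1 / 2 : ENNReal) ^ (k + 1))
    (hIndep : iIndepFun X μ) :
    ∑' m, μ (BadL X m) ≠ ⊤ := by
  refine ne_top_of_le_ne_top ?_ (ENNReal.tsum_le_tsum (fun m => badL_bound hX hμk hIndep m))
  rw [← ENNReal.ofReal_tsum_of_nonneg (fun m => by positivity) summable1]
  exact ENNReal.ofReal_ne_top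

lemma summable2 {δ : ℝ} (hδ : 0 < δ) :
    Summable (fun m : ℕ => (1/2:ℝ)^(⌈(1+δ) * Real.logb 2 m⌉₊ + 1)) := by
  rw [← summable_nat_add_iff 1]
  have hbase : Summable (fun m : ℕ => (((m+1:ℕ):ℝ)^(1+δ))⁻¹) :=
    (summable_nat_add_iff 1).2 ((Real.summable_nat_rpow_inv).2 (by linarith))
  refine Summable.of_nonneg_of_le (fun m => by positivity) (fun m => ?_) hbase
  have hm1 : 1 ≤ m + 1 := Nat.le_add_left 1 m
  have h1 : ((m+1:ℕ):ℝ)^(1+δ) ≤ (2:ℝ)^(⌈(1+δ) * Real.logb 2 (m+1:ℕ)⌉₊) :=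
    rpow_le_ceil_pow hδ hm1
  have h2 : (0:ℝ) < ((m+1:ℕ):ℝ)^(1+δ) := rpow_m_pos hm1
  calc (1/2:ℝ)^(⌈(1+δ) * Real.logb 2 (m+1:ℕ)⌉₊ + 1)
      ≤ (1/2:ℝ)^(⌈(1+δ) * Real.logb 2 (m+1:ℕ)⌉₊) :=
        pow_le_pow_of_le_one (by norm_num) (by norm_num) (Nat.le_succ _)
    _ = ((2:ℝ)^(⌈(1+δ) * Real.logb 2 (m+1:ℕ)⌉₊))⁻¹ := by
        rw [one_div, inv_pow]
    _ ≤ (((m+1:ℕ):ℝ)^(1+δ))⁻¹ := by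
        apply inv_anti₀ h2 h1

lemma tsumU1 (hX : ∀ i, Measurable (X i))
    (hμk : ∀ i k, μ {ω | X i ω = 2 ^ k} = (1 / 2 : ENNReal) ^ (k + 1))
    {δ : ℝ} (hδ : 0 < δ) :
    ∑' m, μ (BadU1 X δ m) ≠ ⊤ := by
  refine ne_top_of_le_ne_top ?_ (ENNReal.tsum_le_tsum (fun m => badU1_bound hX hμk δ m))
  rw [← ENNReal.ofReal_tsum_of_nonneg (fun m => by positivity) (summable2 hδ)]
  exact ENNReal.ofReal_ne_top

lemma summable3 {δ : ℝ} (hδ : 0 < δ) :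
    Summable (fun m : ℕ => (128:ℝ) / ((m+1:ℕ):ℝ)^(1+δ)) := by
  have hbase : Summable (fun m : ℕ => (((m+1:ℕ):ℝ)^(1+δ))⁻¹) :=
    (summable_nat_add_iff 1).2 ((Real.summable_nat_rpow_inv).2 (by linarith))
  simpa [div_eq_mul_inv] using hbase.mul_left (128:ℝ)

lemma tsumU2 (hX : ∀ i, Measurable (X i))
    (hμk : ∀ i k, μ {ω | X i ω = 2 ^ k} = (1 / 2 : ENNReal) ^ (k + 1))
    (hIndep : iIndepFun X μ)
    {δ : ℝ} (hδ : 0 < δ) :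
    ∑' m, μ (BadU2 X δ (m+1)) ≠ ⊤ := by
  refine ne_top_of_le_ne_top ?_
    (ENNReal.tsum_le_tsum (fun m => badU2_bound hX hμk hIndep hδ (Nat.le_add_left 1 m)))
  rw [← ENNReal.ofReal_tsum_of_nonneg (fun m => by positivity) (summable3 hδ)]
  exact ENNReal.ofReal_ne_top

lemma evA {δ : ℝ} (hδ : 0 < δ) (hδ1 : δ ≤ 1) :
    ∀ᶠ m : ℕ in atTop, 4 * ((Km δ m : ℝ) + 1) ≤ (2*(m:ℝ)*Real.log 2)^(1+δ) := by
  have t : Filter.Tendsto (fun m : ℕ => ((m:ℝ))^δ) atTop atTop :=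
    (tendsto_rpow_atTop hδ).comp tendsto_natCast_atTop_atTop
  filter_upwards [t.eventually_ge_atTop 40, eventually_ge_atTop 1] with m h40 hm1
  have hm' : (1:ℝ) ≤ m := by exact_mod_cast hm1
  have hmpos : (0:ℝ) < m := by linarith
  have hlog : Real.log m ≤ (m:ℝ) - 1 := Real.log_le_sub_one_of_pos hmpos
  have hl2 : (1/2 : ℝ) < Real.log 2 := by nlinarith [Real.log_two_gt_d9]
  have hlogb_nonneg : 0 ≤ Real.logb 2 m := Real.logb_nonneg (by norm_num) hm'
  have hlogb : Real.logb 2 m ≤ 2*m := by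
    rw [Real.logb, div_le_iff₀ (by linarith)]
    nlinarith
  have hceil : (⌈(1+δ) * Real.logb 2 m⌉₊ : ℝ) < (1+δ) * Real.logb 2 m + 1 :=
    Nat.ceil_lt_add_one (mul_nonneg (by linarith) hlogb_nonneg)
  have hKm : ((Km δ m : ℕ):ℝ) ≤ 2*m+3+(1+δ)*Real.logb 2 m := by
    unfold Km; push_cast; linarith
  have hmul : (1+δ)*Real.logb 2 m ≤ 4*m := by
    nlinarith
  have hKm2 : ((Km δ m : ℕ):ℝ) + 1 ≤ 10*m := by nlinarith
  have hrpow : (m:ℝ)*((m:ℝ)^δ) ≤ (2*(m:ℝ)*Real.log 2)^(1+δ) := by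
    have h1 : (m:ℝ)^(1+δ) = (m:ℝ)^(1:ℝ) * (m:ℝ)^δ := Real.rpow_add hmpos 1 δ
    have h2 := m_rpow_le_target_base hδ hm1
    rw [h1, Real.rpow_one] at h2
    exact h2
  nlinarith

lemma evB {δ : ℝ} (hδ : 0 < δ) :
    ∀ᶠ m : ℕ in atTop, (64:ℝ) ≤ (2*((m:ℝ)+1))^δ := by
  have t : Filter.Tendsto (fun m : ℕ => ((m:ℝ))^δ) atTop atTop :=
    (tendsto_rpow_atTop hδ).comp tendsto_natCast_atTop_atTop
  filter_upwards [t.eventually_ge_atTop 64, eventually_ge_atTop 1] with m h64 hm1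
  refine le_trans h64 ?_
  apply Real.rpow_le_rpow (Nat.cast_nonneg m) (by linarith) hδ.le

end KhinchinSP

namespace KhinchinSP

open Finset

lemma pointwise_bound {δ : ℝ} (hδ : 0 < δ) (hδ1 : δ ≤ 1) (x : ℕ → ℝ)
    (hxv : ∀ i, ∃ j : ℕ, x i = 2^j)
    {m n : ℕ} (hm1 : 1 ≤ m) (h4n : 4^m ≤ n) (hn4 : n < 4^(m+1))
    (hCount : ∀ k, k < m + 1 → ¬(((4^m : ℕ):ℝ) * pk k / 2
      ≤ |(∑ i ∈ Finset.range (4^m), gk k (x i)) - ((4^m : ℕ):ℝ) * pk k|))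
    (hNoBig : ∀ i, i < 4^(m+1) → ¬((2:ℝ)^(Km δ m) < x i))
    (hT : ¬(target δ m / 2
      ≤ |(∑ i ∈ Finset.range (4^(m+1)), gW (Km δ m) (x i))
          - ((4^(m+1) : ℕ):ℝ) * (((Km δ m : ℕ):ℝ) + 1) / 2|))
    (hevA : 4 * ((Km δ m : ℝ) + 1) ≤ (2*(m:ℝ)*Real.log 2)^(1+δ))
    (hevB : (64:ℝ) ≤ (2*((m:ℝ)+1))^δ) :
    Real.log n ^ (1 - δ) < (∑ i ∈ Finset.range n, x i) / n ∧
    (∑ i ∈ Finset.range n, x i) / n < Real.log n ^ (1 + δ) := by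
  have hx1 : ∀ i, (1:ℝ) ≤ x i := by
    intro i
    obtain ⟨j, hj⟩ := hxv i
    rw [hj]
    exact one_le_pow₀ one_le_two
  have hx0 : ∀ i, (0:ℝ) ≤ x i := fun i => le_trans zero_le_one (hx1 i)
  have hn0 : 0 < n := lt_of_lt_of_le (Nat.pow_pos (by norm_num)) h4n
  have hn0' : (0:ℝ) < n := by exact_mod_cast hn0
  have h4m : (0:ℝ) < (4:ℝ)^m := by positivity
  have hcast4 : ((4^m : ℕ):ℝ) = (4:ℝ)^m := cast_four_pow m
  have hcast4' : ((4^(m+1) : ℕ):ℝ) = (4:ℝ)^(m+1) := cast_four_pow (m+1)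
  have hncast : (4:ℝ)^m ≤ (n:ℝ) := by
    rw [← hcast4]; exact_mod_cast h4n
  have hncast' : (n:ℝ) ≤ (4:ℝ)^(m+1) := by
    rw [← hcast4']; exact_mod_cast (le_of_lt hn4)
  -- log bounds
  have hlog2pos : (0:ℝ) < Real.log 2 := Real.log_pos (by norm_num)
  have hlog4 : Real.log 4 = 2 * Real.log 2 := by
    rw [show (4:ℝ) = 2^2 by norm_num, Real.log_pow]
    push_cast; ring
  have hlogn_nonneg : 0 ≤ Real.log n :=
    Real.log_nonneg (by exact_mod_cast Nat.one_le_iff_ne_zero.2 hn0.ne')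
  have hlogn_le : Real.log n ≤ 2*((m:ℝ)+1) := by
    have h1 : Real.log n ≤ Real.log ((4:ℝ)^(m+1)) :=
      Real.log_le_log (by positivity) hncast'
    rw [Real.log_pow, hlog4] at h1
    have hl2 : Real.log 2 < 1 := by
      nlinarith [Real.log_two_lt_d9]
    push_cast at h1
    nlinarith [Nat.cast_nonneg (α := ℝ) m]
  ---- LOWER BOUND ----
  have hCk : ∀ k, k < m + 1 →
      (4:ℝ)^m * pk k / 2 ≤ ∑ i ∈ Finset.range (4^m), gk k (x i) := by
    intro k hk
    have h := not_le.1 (hCount k hk)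
    rw [hcast4] at h
    have := abs_lt.1 h
    linarith [this.1]
  have hsum_gW : ∑ i ∈ Finset.range (4^m), gW m (x i)
      = ∑ k ∈ Finset.range (m+1), ∑ i ∈ Finset.range (4^m), (2:ℝ)^k * gk k (x i) := by
    unfold gW
    rw [Finset.sum_comm]
  have hlower1 : ((m:ℝ)+1) * ((4:ℝ)^m / 4) ≤ ∑ i ∈ Finset.range (4^m), x i := by
    have h1 : ∑ i ∈ Finset.range (4^m), gW m (x i) ≤ ∑ i ∈ Finset.range (4^m), x i :=
      Finset.sum_le_sum fun i _ => gW_le_self (hx0 i)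
    refine le_trans ?_ h1
    rw [hsum_gW]
    have h2 : ∀ k ∈ Finset.range (m+1),
        (4:ℝ)^m / 4 ≤ ∑ i ∈ Finset.range (4^m), (2:ℝ)^k * gk k (x i) := by
      intro k hk
      rw [← Finset.mul_sum]
      have h3 := hCk k (Finset.mem_range.1 hk)
      have h4 : (4:ℝ)^m / 4 = 2^k * ((4:ℝ)^m * pk k / 2) := by
        unfold pk
        rw [one_div, inv_pow, pow_succ]
        field_simp
        ring
      rw [h4]
      have h5 : (0:ℝ) < (2:ℝ)^k := by positivity
      exact mul_le_mul_of_nonneg_left h3 h5.le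
    calc ((m:ℝ)+1) * ((4:ℝ)^m / 4)
        = ∑ _k ∈ Finset.range (m+1), (4:ℝ)^m / 4 := by
          rw [Finset.sum_const, card_range, nsmul_eq_mul]; push_cast; ring
      _ ≤ ∑ k ∈ Finset.range (m+1), ∑ i ∈ Finset.range (4^m), (2:ℝ)^k * gk k (x i) :=
          Finset.sum_le_sum h2
  have hlower2 : ∑ i ∈ Finset.range (4^m), x i ≤ ∑ i ∈ Finset.range n, x i :=
    Finset.sum_le_sum_of_subset_of_nonneg
      (Finset.range_subset_range.2 h4n) (fun i _ _ => hx0 i)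
  have hfrac : ((m:ℝ)+1)/16 ≤ (∑ i ∈ Finset.range n, x i) / n := by
    rw [div_le_div_iff₀ (by norm_num) hn0']
    calc ((m:ℝ)+1) * n ≤ ((m:ℝ)+1) * (4:ℝ)^(m+1) := by
          have : (0:ℝ) ≤ (m:ℝ)+1 := by positivity
          exact mul_le_mul_of_nonneg_left hncast' this
      _ = (((m:ℝ)+1) * ((4:ℝ)^m/4)) * 16 := by rw [pow_succ]; ring
      _ ≤ (∑ i ∈ Finset.range n, x i) * 16 := by
          have := le_trans hlower1 hlower2
          linarith
  have hlow : Real.log n ^ (1 - δ) < ((m:ℝ)+1)/16 := by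
    have hb0 : (0:ℝ) < 2*((m:ℝ)+1) := by positivity
    have h1 : Real.log n ^ (1 - δ) ≤ (2*((m:ℝ)+1)) ^ (1 - δ) :=
      Real.rpow_le_rpow hlogn_nonneg hlogn_le (by linarith)
    have h2 : (2*((m:ℝ)+1)) ^ (1 - δ) = (2*((m:ℝ)+1)) / (2*((m:ℝ)+1))^δ := by
      rw [Real.rpow_sub hb0, Real.rpow_one]
    have h3 : (2*((m:ℝ)+1)) / (2*((m:ℝ)+1))^δ ≤ (2*((m:ℝ)+1)) / 64 := by
      gcongr
    have h4 : (2*((m:ℝ)+1)) / 64 < ((m:ℝ)+1)/16 := by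
      rw [div_lt_div_iff₀ (by norm_num) (by norm_num)]
      have : (0:ℝ) ≤ (m:ℝ) := Nat.cast_nonneg m
      nlinarith
    calc Real.log n ^ (1 - δ) ≤ (2*((m:ℝ)+1)) ^ (1 - δ) := h1
      _ = (2*((m:ℝ)+1)) / (2*((m:ℝ)+1))^δ := h2
      _ ≤ (2*((m:ℝ)+1)) / 64 := h3
      _ < ((m:ℝ)+1)/16 := h4
  ---- UPPER BOUND ----
  have hxK : ∀ i ∈ Finset.range (4^(m+1)), gW (Km δ m) (x i) = x i := by
    intro i hi
    obtain ⟨j, hj⟩ := hxv i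
    have hle : x i ≤ 2^(Km δ m) := not_lt.1 (hNoBig i (Finset.mem_range.1 hi))
    rw [hj] at hle ⊢
    exact gW_eq_of_le hle
  have hTsum : ∑ i ∈ Finset.range (4^(m+1)), gW (Km δ m) (x i)
      = ∑ i ∈ Finset.range (4^(m+1)), x i := Finset.sum_congr rfl hxK
  have hE : ((4^(m+1) : ℕ):ℝ) * (((Km δ m : ℕ):ℝ) + 1) / 2 ≤ target δ m / 2 := by
    rw [hcast4']
    unfold target
    have h2 : (4:ℝ)^(m+1) * (((Km δ m : ℕ):ℝ) + 1)
        = (4:ℝ)^m * (4*(((Km δ m : ℕ):ℝ)+1)) := by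
      rw [pow_succ]; ring
    rw [h2]
    gcongr
  have hTlt : ∑ i ∈ Finset.range (4^(m+1)), x i < target δ m := by
    have h := not_le.1 hT
    rw [hTsum] at h
    have h1 := (abs_lt.1 h).2
    have h2 := sub_lt_iff_lt_add.1 h1
    calc ∑ i ∈ Finset.range (4^(m+1)), x i
        < target δ m / 2 + ((4^(m+1) : ℕ):ℝ) * (((Km δ m : ℕ):ℝ) + 1) / 2 := h2
      _ ≤ target δ m / 2 + target δ m / 2 := by linarith
      _ = target δ m := by ring
  have hupper2 : ∑ i ∈ Finset.range n, x i ≤ ∑ i ∈ Finset.range (4^(m+1)), x i :=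
    Finset.sum_le_sum_of_subset_of_nonneg
      (Finset.range_subset_range.2 (le_of_lt hn4)) (fun i _ _ => hx0 i)
  have htarget_le : target δ m ≤ (n:ℝ) * Real.log n ^ (1+δ) := by
    unfold target
    have hlog4m : Real.log ((4:ℝ)^m) = 2*(m:ℝ)*Real.log 2 := by
      rw [Real.log_pow, hlog4]; push_cast; ring
    have h1 : (2*(m:ℝ)*Real.log 2) ^ (1+δ) ≤ Real.log n ^ (1+δ) := by
      rw [← hlog4m]
      apply Real.rpow_le_rpow (Real.log_nonneg (one_le_pow₀ (by norm_num)))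
        (Real.log_le_log (by positivity) hncast) (by linarith)
    apply mul_le_mul hncast h1 (Real.rpow_nonneg (by positivity) _)
      (Nat.cast_nonneg n)
  have hupfinal : (∑ i ∈ Finset.range n, x i) / n < Real.log n ^ (1+δ) := by
    rw [div_lt_iff₀ hn0']
    calc ∑ i ∈ Finset.range n, x i
        ≤ ∑ i ∈ Finset.range (4^(m+1)), x i := hupper2
      _ < target δ m := hTlt
      _ ≤ (n:ℝ) * Real.log n ^ (1+δ) := htarget_le
      _ = Real.log n ^ (1+δ) * n := by ring
  exact ⟨lt_of_lt_of_le hlow hfrac, hupfinal⟩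

end KhinchinSP

namespace KhinchinSP

open Finset Filter

variable {Ω : Type*} [MeasurableSpace Ω] {μ : Measure Ω} [IsProbabilityMeasure μ]
  {X : ℕ → Ω → ℝ}

lemma as_main (hX : ∀ i, Measurable (X i))
    (hμk : ∀ i k, μ {ω | X i ω = 2 ^ k} = (1 / 2 : ENNReal) ^ (k + 1))
    (hIndep : iIndepFun X μ)
    {δ : ℝ} (hδ : 0 < δ) (hδ1 : δ ≤ 1) :
    ∀ᵐ ω ∂μ, ∃ N : ℕ, ∀ n, n > N →
      Real.log n ^ (1 - δ) < (∑ i ∈ Finset.range n, X i ω) / n ∧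
      (∑ i ∈ Finset.range n, X i ω) / n < Real.log n ^ (1 + δ) := by
  obtain ⟨M₀, hM₀⟩ := eventually_atTop.1 ((evA hδ hδ1).and (evB hδ))
  have hval : ∀ᵐ ω ∂μ, ∀ i, ∃ j : ℕ, X i ω = 2^j :=
    (ae_all_iff).2 fun i => ae_value (hX i) (hμk i)
  have hBCL : ∀ᵐ ω ∂μ, ∀ᶠ m in atTop, ω ∉ BadL X m :=
    ae_eventually_notMem (tsumL hX hμk hIndep)
  have hBCU1 : ∀ᵐ ω ∂μ, ∀ᶠ m in atTop, ω ∉ BadU1 X δ m :=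
    ae_eventually_notMem (tsumU1 hX hμk hδ)
  have hBCU2 : ∀ᵐ ω ∂μ, ∀ᶠ m in atTop, ω ∉ BadU2 X δ (m+1) :=
    ae_eventually_notMem (tsumU2 hX hμk hIndep hδ)
  filter_upwards [hval, hBCL, hBCU1, hBCU2] with ω hωv hω1 hω2 hω3
  obtain ⟨M₁, hM₁⟩ := eventually_atTop.1 hω1
  obtain ⟨M₂, hM₂⟩ := eventually_atTop.1 hω2
  obtain ⟨M₃, hM₃⟩ := eventually_atTop.1 hω3
  set M := ((M₁ + 1) ⊔ (M₂ + 1)) ⊔ ((M₃ + 2) ⊔ (M₀ + 1)) with hMdef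
  refine ⟨4 ^ M, fun n hn => ?_⟩
  set m := Nat.log 4 n with hmdef
  have hMM1 : M₁ + 1 ≤ M := le_sup_of_le_left le_sup_left
  have hMM2 : M₂ + 1 ≤ M := le_sup_of_le_left le_sup_right
  have hMM3 : M₃ + 2 ≤ M := le_sup_of_le_right le_sup_left
  have hMM0 : M₀ + 1 ≤ M := le_sup_of_le_right le_sup_right
  have hnpos : 0 < n := lt_of_le_of_lt (Nat.zero_le _) hn
  have hMm : M ≤ m := by
    rw [hmdef]
    exact (Nat.le_log_iff_pow_le (by norm_num) hnpos.ne').2 (le_of_lt hn)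
  have hm1 : 1 ≤ m := le_trans (le_trans (Nat.le_add_left 1 M₁) hMM1) hMm
  have h4n : 4^m ≤ n := Nat.pow_log_le_self 4 hnpos.ne'
  have hn4 : n < 4^(m+1) := Nat.lt_pow_succ_log_self (by norm_num) n
  have hA : M₁ ≤ m := by have := le_trans hMM1 hMm; omega
  have hB : M₂ ≤ m := by have := le_trans hMM2 hMm; omega
  have hC : M₃ + 2 ≤ m := le_trans hMM3 hMm
  have hD : M₀ ≤ m := by have := le_trans hMM0 hMm; omega
  have hnotL : ω ∉ BadL X m := hM₁ m hA
  have hnotU1 : ω ∉ BadU1 X δ m := hM₂ m hB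
  have hnotU2 : ω ∉ BadU2 X δ m := by
    have h := hM₃ (m-1) (by omega)
    have hmm : m - 1 + 1 = m := by omega
    rwa [hmm] at h
  have hCount : ∀ k, k < m + 1 → ¬(((4^m : ℕ):ℝ) * pk k / 2
      ≤ |(∑ i ∈ Finset.range (4^m), gk k (X i ω)) - ((4^m : ℕ):ℝ) * pk k|) := by
    intro k hk hc
    exact hnotL (Set.mem_iUnion₂.2 ⟨k, Finset.mem_range.2 hk, hc⟩)
  have hNoBig : ∀ i, i < 4^(m+1) → ¬((2:ℝ)^(Km δ m) < X i ω) := by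
    intro i hi hc
    exact hnotU1 (Set.mem_iUnion₂.2 ⟨i, Finset.mem_range.2 hi, hc⟩)
  have hT : ¬(target δ m / 2
      ≤ |(∑ i ∈ Finset.range (4^(m+1)), gW (Km δ m) (X i ω))
          - ((4^(m+1) : ℕ):ℝ) * (((Km δ m : ℕ):ℝ) + 1) / 2|) := fun hc => hnotU2 hc
  exact pointwise_bound hδ hδ1 (fun i => X i ω) hωv hm1 h4n hn4 hCount hNoBig hT
    (hM₀ m hD).1 (hM₀ m hD).2

lemma as_main' (hX : ∀ i, Measurable (X i))
    (hμk : ∀ i k, μ {ω | X i ω = 2 ^ k} = (1 / 2 : ENNReal) ^ (k + 1))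
    (hIndep : iIndepFun X μ)
    {δ : ℝ} (hδ : 0 < δ) :
    ∀ᵐ ω ∂μ, ∃ N : ℕ, ∀ n, n > N →
      Real.log n ^ (1 - δ) < (∑ i ∈ Finset.range n, X i ω) / n ∧
      (∑ i ∈ Finset.range n, X i ω) / n < Real.log n ^ (1 + δ) := by
  set δ' := min δ 1 with hδ'def
  have hδ'0 : 0 < δ' := lt_min hδ one_pos
  have hδ'1 : δ' ≤ 1 := min_le_right _ _
  have hδ'δ : δ' ≤ δ := min_le_left _ _
  filter_upwards [as_main hX hμk hIndep hδ'0 hδ'1] with ω hω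
  obtain ⟨N, hN⟩ := hω
  refine ⟨N ⊔ 2, fun n hn => ?_⟩
  have hn2 : 2 < n := lt_of_le_of_lt le_sup_right hn
  have hnN : n > N := lt_of_le_of_lt le_sup_left hn
  obtain ⟨hl, hu⟩ := hN n hnN
  have hlogn : 1 ≤ Real.log n := by
    have h3 : (3:ℝ) ≤ n := by exact_mod_cast hn2
    have : Real.exp 1 < 3 := by
      nlinarith [Real.exp_one_lt_d9]
    have h1 : 1 < Real.log 3 := (Real.lt_log_iff_exp_lt (by norm_num)).2 this
    have h2 : Real.log 3 ≤ Real.log n := Real.log_le_log (by norm_num) h3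
    linarith
  constructor
  · refine lt_of_le_of_lt ?_ hl
    exact Real.rpow_le_rpow_of_exponent_le hlogn (by linarith)
  · refine lt_of_lt_of_le hu ?_
    exact Real.rpow_le_rpow_of_exponent_le hlogn (by linarith)

end KhinchinSP

end Aux

/-- Khinchin's restatement of Theorem II: for i.i.d. St. Petersburg payoffs, for every
`δ > 0` and `η > 0` there is `N` such that with probability exceeding `1 - η`, for all
`n > N` the arithmetic mean `σ_n = (X₁ + ⋯ + X_n)/n` satisfies
`(log n)^{1-δ} < σ_n < (log n)^{1+δ}`. -/
theorem khinchin_theorem_II'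
    {Ω : Type*} [MeasurableSpace Ω] (μ : Measure Ω) [IsProbabilityMeasure μ]
    (X : ℕ → Ω → ℝ)
    (hSP : ∀ i, IsStPetersburg μ (X i))
    (hIndep : iIndepFun X μ)
    (hIdent : ∀ i, IdentDistrib (X i) (X 0) μ μ) :
    ∀ δ > (0 : ℝ), ∀ η > (0 : ℝ), ∃ N : ℕ,
      (μ {ω | ∀ n > N,
          Real.log n ^ (1 - δ) < (∑ i ∈ Finset.range n, X i ω) / n ∧
          (∑ i ∈ Finset.range n, X i ω) / n < Real.log n ^ (1 + δ)}).toReal > 1 - η := by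
  have hSP' : ∀ i, Measurable (X i) ∧
      ∀ k : ℕ, μ {ω | X i ω = 2 ^ k} = (1 / 2 : ENNReal) ^ (k + 1) := hSP
  intro δ hδ η hη
  have hX : ∀ i, Measurable (X i) := fun i => (hSP i).1
  have hμk : ∀ i k, μ {ω | X i ω = 2 ^ k} = (1 / 2 : ENNReal) ^ (k + 1) := fun i => (hSP i).2
  have hae := KhinchinSP.as_main' hX hμk hIndep hδ
  set E : ℕ → Set Ω := fun N => {ω | ∀ n, n > N →
      Real.log n ^ (1 - δ) < (∑ i ∈ Finset.range n, X i ω) / n ∧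
      (∑ i ∈ Finset.range n, X i ω) / n < Real.log n ^ (1 + δ)} with hE
  have hmono : Monotone E := by
    intro a b hab ω hω n hn
    exact hω n (lt_of_le_of_lt hab hn)
  have hunion : μ (⋃ N, E N) = 1 := by
    rw [← MeasureTheory.measure_univ (μ := μ)]
    apply MeasureTheory.measure_congr
    rw [Filter.eventuallyEq_univ]
    filter_upwards [hae] with ω hω
    obtain ⟨N, hN⟩ := hω
    exact Set.mem_iUnion.2 ⟨N, hN⟩
  have htend : Filter.Tendsto (fun N => μ (E N)) Filter.atTop (nhds 1) := by
    have h := MeasureTheory.tendsto_measure_iUnion_atTop (μ := μ) hmono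
    rwa [hunion] at h
  have htoReal : Filter.Tendsto (fun N => (μ (E N)).toReal) Filter.atTop (nhds 1) := by
    have h := (ENNReal.tendsto_toReal (by norm_num : (1:ENNReal) ≠ ⊤)).comp htend
    simpa [Function.comp_def] using h
  have hev := htoReal.eventually (eventually_gt_nhds (by linarith : (1:ℝ) - η < 1))
  obtain ⟨N, hN⟩ := hev.exists
  exact ⟨N, hN⟩
end
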